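/- arXiv:2301.01466 — 2 statements merged into one kernel-verified Lean document; each statement's English description precedes it below -/
import Mathlib

section
/- With notation as before (0 < α < 1, λ > 0, μ > 0), lim_{n→∞} (n/μ) ∫₀^∞ e^{-sx} x m_α(x | μ/n, λ) dx = α s^{α-1}/(λ + s^α) for every s > 0; in particular the limit is finite and independent of μ. -/
/-!
For a fixed mixing time `t`, the substitution `x = t^{1/α} u` turns `∫ e^{-sx} x f_α(x|t) dx` into
`t^{1/α}` times minus the derivative of the Laplace transform `r ↦ e^{-r^α}` of `f_α` at
`r = s t^{1/α}`, which is `α s^{α-1} t e^{-s^α t}`. Everything being nonnegative, Fubini lets us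
integrate this against the gamma density of shape `ν = μ/n`, which gives
`α s^{α-1} ν λ^ν / (λ + s^α)^{ν+1}`. After multiplying by `n/μ = 1/ν` what is left is continuous
in `ν`, and its value at `ν = 0` is the limit.
-/

open MeasureTheory Real Set Filter Function

section LaplaceTransform

variable {g : ℝ → ℝ}

lemma aestronglyMeasurable_of_integrableOn_exp_neg_mul {r : ℝ} {s : Set ℝ}
    (h : IntegrableOn (fun t => exp (-(r * t)) * g t) s) :
    AEStronglyMeasurable g (volume.restrict s) := by
  refine ((continuous_exp.comp (continuous_const_mul r)).aestronglyMeasurable.mul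
    h.aestronglyMeasurable).congr (ae_of_all _ fun t => ?_)
  simp only [comp_apply, Pi.mul_apply, ← mul_assoc, ← exp_add, add_neg_cancel, exp_zero, one_mul]

lemma mul_exp_neg_mul_le {s r t : ℝ} (hs : 0 < s) (hr : s / 2 < r) (ht : 0 ≤ t) :
    t * exp (-(r * t)) ≤ 4 / s * exp (-(s / 4 * t)) := by
  have hlin : t ≤ 4 / s * exp (s / 4 * t) := by
    have := add_one_le_exp (s / 4 * t)
    calc t = 4 / s * (s / 4 * t) := by field_simp
      _ ≤ 4 / s * exp (s / 4 * t) := by gcongr; linarith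
  calc t * exp (-(r * t)) ≤ 4 / s * exp (s / 4 * t) * exp (-(s / 2 * t)) := by
        gcongr
    _ = 4 / s * exp (-(s / 4 * t)) := by rw [mul_assoc, ← exp_add]; ring_nf

lemma hasDerivAt_integral_exp_neg_mul_mul
    (hg : ∀ r > 0, IntegrableOn (fun t => exp (-(r * t)) * g t) (Ioi 0)) {s : ℝ} (hs : 0 < s) :
    IntegrableOn (fun t => t * exp (-(s * t)) * g t) (Ioi 0) ∧
      HasDerivAt (fun r => ∫ t in Ioi 0, exp (-(r * t)) * g t)
        (-∫ t in Ioi 0, t * exp (-(s * t)) * g t) s := by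
  have hbound : ∀ t ∈ Ioi (0 : ℝ), ∀ r ∈ Metric.ball s (s / 2),
      ‖-(t * exp (-(r * t)) * g t)‖ ≤ 4 / s * ‖exp (-(s / 4 * t)) * g t‖ := by
    intro t ht r hr
    have hr' : s / 2 < r := by
      have := abs_lt.1 (Real.dist_eq r s ▸ Metric.mem_ball.1 hr); linarith
    rw [norm_neg, norm_mul, norm_mul, norm_mul, ← mul_assoc, norm_of_nonneg ht.out.le,
      norm_of_nonneg (exp_pos _).le, norm_of_nonneg (exp_pos _).le]
    exact mul_le_mul_of_nonneg_right (mul_exp_neg_mul_le hs hr' ht.out.le) (norm_nonneg _)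
  have hF'_meas : AEStronglyMeasurable (fun t => -(t * exp (-(s * t)) * g t))
      (volume.restrict (Ioi 0)) :=
    ((continuous_id.mul (continuous_exp.comp (continuous_const_mul s).neg)).aestronglyMeasurable.mul
      (aestronglyMeasurable_of_integrableOn_exp_neg_mul (hg s hs))).neg
  obtain ⟨hint, hderiv⟩ := hasDerivAt_integral_of_dominated_loc_of_deriv_le
    (F' := fun r t => -(t * exp (-(r * t)) * g t))
    (Metric.ball_mem_nhds s (half_pos hs))
    (eventually_of_mem (Ioi_mem_nhds hs) fun r hr => (hg r hr).aestronglyMeasurable)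
    (hg s hs) hF'_meas (ae_restrict_of_forall_mem measurableSet_Ioi hbound)
    ((hg _ (by positivity)).norm.const_mul _)
    (ae_of_all _ fun t r _ => by
      have hexp : HasDerivAt (fun r => -(r * t)) (-t) r := by
        simpa using (hasDerivAt_mul_const t).fun_neg
      exact (hexp.exp.mul_const (g t)).congr_deriv (by ring))
  refine ⟨?_, by simpa [integral_neg] using hderiv⟩
  have := hint.neg
  simp only [Pi.neg_def, neg_neg] at this
  exact this

end LaplaceTransform

section StableLaplace

variable {f : ℝ → ℝ} {α : ℝ}

lemma integrableOn_of_laplace_eq_exp_neg_rpow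
    (hlap : ∀ s > 0, ∫ t in Ioi 0, exp (-(s * t)) * f t = exp (-(s ^ α))) :
    ∀ s > 0, IntegrableOn (fun t => exp (-(s * t)) * f t) (Ioi 0) := fun s hs =>
  Integrable.of_integral_ne_zero (by rw [hlap s hs]; exact (exp_pos _).ne')

lemma integral_mul_exp_neg_mul_of_laplace_eq_exp_neg_rpow
    (hlap : ∀ s > 0, ∫ t in Ioi 0, exp (-(s * t)) * f t = exp (-(s ^ α))) {s : ℝ} (hs : 0 < s) :
    IntegrableOn (fun t => t * exp (-(s * t)) * f t) (Ioi 0) ∧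
      ∫ t in Ioi 0, t * exp (-(s * t)) * f t = α * s ^ (α - 1) * exp (-(s ^ α)) := by
  obtain ⟨hint, hderiv⟩ :=
    hasDerivAt_integral_exp_neg_mul_mul (integrableOn_of_laplace_eq_exp_neg_rpow hlap) hs
  have hderiv' : HasDerivAt (fun r => exp (-(r ^ α))) (-∫ t in Ioi 0, t * exp (-(s * t)) * f t) s :=
    hderiv.congr_of_eventuallyEq (eventually_of_mem (Ioi_mem_nhds hs) fun r hr => (hlap r hr).symm)
  have hderiv'' : HasDerivAt (fun r => exp (-(r ^ α))) (exp (-(s ^ α)) * -(α * s ^ (α - 1))) s :=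
    (hasDerivAt_rpow_const (Or.inl hs.ne')).neg.exp
  refine ⟨hint, ?_⟩
  linarith [hderiv'.unique hderiv'']

lemma integral_exp_neg_mul_mul_comp_mul_inv (g : ℝ → ℝ) (s : ℝ) {c : ℝ} (hc : 0 < c) :
    (IntegrableOn (fun x => exp (-(s * x)) * x * (g (x * c⁻¹) * c⁻¹)) (Ioi 0) ↔
      IntegrableOn (fun u => u * exp (-(s * c * u)) * g u) (Ioi 0)) ∧
    ∫ x in Ioi 0, exp (-(s * x)) * x * (g (x * c⁻¹) * c⁻¹) =
      c * ∫ u in Ioi 0, u * exp (-(s * c * u)) * g u := by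
  set G : ℝ → ℝ := fun u => u * exp (-(s * c * u)) * g u
  have hfun : (fun x => exp (-(s * x)) * x * (g (x * c⁻¹) * c⁻¹)) = fun x => G (x * c⁻¹) := by
    funext x
    simp only [G]
    field_simp
  have hint := integrableOn_Ioi_comp_mul_right_iff G 0 (inv_pos.2 hc)
  have hintegral := integral_comp_mul_right_Ioi G 0 (inv_pos.2 hc)
  rw [zero_mul] at hint hintegral
  rw [hfun, hintegral, inv_inv, smul_eq_mul]
  exact ⟨hint, rfl⟩

lemma integral_exp_neg_mul_mul_stable_rescaled (hα : α ≠ 0)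
    (hlap : ∀ s > 0, ∫ t in Ioi 0, exp (-(s * t)) * f t = exp (-(s ^ α))) {s t : ℝ} (hs : 0 < s)
    (ht : 0 < t) :
    IntegrableOn (fun x => exp (-(s * x)) * x * (f (x * t ^ (-(1 / α))) * t ^ (-(1 / α))))
        (Ioi 0) ∧
      ∫ x in Ioi 0, exp (-(s * x)) * x * (f (x * t ^ (-(1 / α))) * t ^ (-(1 / α))) =
        α * s ^ (α - 1) * t * exp (-(s ^ α * t)) := by
  set c := t ^ (1 / α)
  have hc : 0 < c := rpow_pos_of_pos ht _
  have hc_inv : t ^ (-(1 / α)) = c⁻¹ := rpow_neg ht.le _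
  have hc_pow : c ^ α = t := by rw [← rpow_mul ht.le, one_div_mul_cancel hα, rpow_one]
  obtain ⟨hint, hintegral⟩ := integral_mul_exp_neg_mul_of_laplace_eq_exp_neg_rpow hlap
    (mul_pos hs hc)
  obtain ⟨hint_iff, hrescale⟩ := integral_exp_neg_mul_mul_comp_mul_inv f s hc
  rw [hc_inv, hrescale, hintegral, mul_rpow hs.le hc.le, mul_rpow hs.le hc.le, hc_pow,
    rpow_sub_one hc.ne', hc_pow]
  refine ⟨hint_iff.2 hint, ?_⟩
  field_simp

end StableLaplace

lemma quasiMeasurePreserving_mul_rpow (β : ℝ) :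
    Measure.QuasiMeasurePreserving (fun p : ℝ × ℝ => p.1 * p.2 ^ β)
      ((volume.restrict (Ioi 0)).prod (volume.restrict (Ioi 0))) (volume.restrict (Ioi 0)) := by
  refine QuasiMeasurePreserving.prod_of_left (by fun_prop) ?_
  filter_upwards [ae_restrict_mem measurableSet_Ioi] with t ht
  have hc : 0 < t ^ β := rpow_pos_of_pos ht β
  simpa only [smul_eq_mul, mul_comm] using
    (Measure.quasiMeasurePreserving_smul volume hc.ne').restrict (s := Ioi (0 : ℝ)) (t := Ioi 0)
      fun x (hx : 0 < x) => smul_pos hc hx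

lemma integral_integral_swap_of_nonneg {X Y : Type*} [MeasurableSpace X] [MeasurableSpace Y]
    {μ : Measure X} {ν : Measure Y} [SFinite μ] [SFinite ν] {H : X → Y → ℝ}
    (hH : AEStronglyMeasurable (uncurry H) (μ.prod ν)) (hH_nonneg : ∀ᵐ y ∂ν, ∀ᵐ x ∂μ, 0 ≤ H x y)
    (hH_int : ∀ᵐ y ∂ν, Integrable (fun x => H x y) μ)
    (hH_int' : Integrable (fun y => ∫ x, H x y ∂μ) ν) :
    ∫ x, ∫ y, H x y ∂ν ∂μ = ∫ y, ∫ x, H x y ∂μ ∂ν := by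
  refine integral_integral_swap ((integrable_prod_iff' hH).2 ⟨hH_int, hH_int'.congr ?_⟩)
  filter_upwards [hH_nonneg] with y hy
  exact integral_congr_ae (hy.mono fun x hx => (norm_of_nonneg hx).symm)

noncomputable def stableGammaMixture (f : ℝ → ℝ) (α lam ν x : ℝ) : ℝ :=
  lam ^ ν / Gamma ν *
    ∫ t in Ioi 0, f (x * t ^ (-(1 / α))) * t ^ (-(1 / α)) * t ^ (ν - 1) * exp (-(lam * t))

section Mixture

variable {f : ℝ → ℝ} {α lam ν s : ℝ}

lemma integral_exp_neg_mul_mul_stable_rescaled_mul_gamma (hα : α ≠ 0)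
    (hlap : ∀ s > 0, ∫ t in Ioi 0, exp (-(s * t)) * f t = exp (-(s ^ α))) (hs : 0 < s) {t : ℝ}
    (ht : 0 < t) :
    IntegrableOn (fun x => exp (-(s * x)) * (x *
        (f (x * t ^ (-(1 / α))) * t ^ (-(1 / α)) * t ^ (ν - 1) * exp (-(lam * t))))) (Ioi 0) ∧
      ∫ x in Ioi 0, exp (-(s * x)) * (x *
          (f (x * t ^ (-(1 / α))) * t ^ (-(1 / α)) * t ^ (ν - 1) * exp (-(lam * t)))) =
        α * s ^ (α - 1) * (t ^ (ν + 1 - 1) * exp (-((lam + s ^ α) * t))) := by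
  obtain ⟨hint, hintegral⟩ := integral_exp_neg_mul_mul_stable_rescaled hα hlap hs ht
  have hsplit : (fun x => exp (-(s * x)) * (x *
        (f (x * t ^ (-(1 / α))) * t ^ (-(1 / α)) * t ^ (ν - 1) * exp (-(lam * t))))) =
      fun x => exp (-(s * x)) * x * (f (x * t ^ (-(1 / α))) * t ^ (-(1 / α))) *
        (t ^ (ν - 1) * exp (-(lam * t))) := by
    funext x; ring
  rw [hsplit, integral_mul_const, hintegral, add_sub_cancel_right, rpow_sub_one ht.ne', add_mul,
    neg_add, exp_add]
  refine ⟨hint.mul_const _, ?_⟩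
  field_simp

lemma integral_exp_neg_mul_mul_integral_stable_rescaled (hα : α ≠ 0)
    (hf_nonneg : ∀ x > 0, 0 ≤ f x)
    (hlap : ∀ s > 0, ∫ t in Ioi 0, exp (-(s * t)) * f t = exp (-(s ^ α))) (hlam : 0 < lam)
    (hν : 0 < ν) (hs : 0 < s) :
    ∫ x in Ioi 0, exp (-(s * x)) * (x *
        ∫ t in Ioi 0, f (x * t ^ (-(1 / α))) * t ^ (-(1 / α)) * t ^ (ν - 1) * exp (-(lam * t))) =
      α * s ^ (α - 1) * ∫ t in Ioi 0, t ^ (ν + 1 - 1) * exp (-((lam + s ^ α) * t)) := by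
  set H : ℝ → ℝ → ℝ := fun x t => exp (-(s * x)) * (x *
    (f (x * t ^ (-(1 / α))) * t ^ (-(1 / α)) * t ^ (ν - 1) * exp (-(lam * t))))
  have hf_meas : AEStronglyMeasurable f (volume.restrict (Ioi 0)) :=
    aestronglyMeasurable_of_integrableOn_exp_neg_mul
      (integrableOn_of_laplace_eq_exp_neg_rpow hlap 1 one_pos)
  have hH_meas : AEStronglyMeasurable (uncurry H)
      ((volume.restrict (Ioi 0)).prod (volume.restrict (Ioi 0))) := by
    have := hf_meas.comp_quasiMeasurePreserving (quasiMeasurePreserving_mul_rpow (-(1 / α)))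
    exact (Measurable.aestronglyMeasurable (by fun_prop)).mul
      ((Measurable.aestronglyMeasurable (by fun_prop)).mul
        (((this.mul (Measurable.aestronglyMeasurable (by fun_prop))).mul
          (Measurable.aestronglyMeasurable (by fun_prop))).mul
            (Measurable.aestronglyMeasurable (by fun_prop))))
  have hH_nonneg : ∀ᵐ t ∂volume.restrict (Ioi 0), ∀ᵐ x ∂volume.restrict (Ioi 0), 0 ≤ H x t := by
    filter_upwards [ae_restrict_mem measurableSet_Ioi] with t (ht : 0 < t)
    filter_upwards [ae_restrict_mem measurableSet_Ioi] with x (hx : 0 < x)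
    have := hf_nonneg _ (mul_pos hx (rpow_pos_of_pos ht (-(1 / α))))
    positivity
  have hgamma : IntegrableOn (fun t => t ^ (ν + 1 - 1) * exp (-((lam + s ^ α) * t))) (Ioi 0) :=
    Integrable.of_integral_ne_zero <| by
      rw [integral_rpow_mul_exp_neg_mul_Ioi (by linarith) (by positivity)]
      positivity
  have hinner := fun t (ht : t ∈ Ioi (0 : ℝ)) =>
    integral_exp_neg_mul_mul_stable_rescaled_mul_gamma (ν := ν) (lam := lam) hα hlap hs ht
  calc ∫ x in Ioi 0, exp (-(s * x)) * (x *
          ∫ t in Ioi 0, f (x * t ^ (-(1 / α))) * t ^ (-(1 / α)) * t ^ (ν - 1) * exp (-(lam * t)))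
      = ∫ x in Ioi 0, ∫ t in Ioi 0, H x t := by simp only [H, integral_const_mul]
    _ = ∫ t in Ioi 0, ∫ x in Ioi 0, H x t :=
      integral_integral_swap_of_nonneg hH_meas hH_nonneg
        (ae_restrict_of_forall_mem measurableSet_Ioi fun t ht => (hinner t ht).1)
        ((hgamma.const_mul _).congr
          (ae_restrict_of_forall_mem measurableSet_Ioi fun t ht => (hinner t ht).2.symm))
    _ = ∫ t in Ioi 0, α * s ^ (α - 1) * (t ^ (ν + 1 - 1) * exp (-((lam + s ^ α) * t))) :=
      setIntegral_congr_fun measurableSet_Ioi fun t ht => (hinner t ht).2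
    _ = _ := integral_const_mul _ _

theorem integral_exp_neg_mul_mul_stableGammaMixture (hα : α ≠ 0)
    (hf_nonneg : ∀ x > 0, 0 ≤ f x)
    (hlap : ∀ s > 0, ∫ t in Ioi 0, exp (-(s * t)) * f t = exp (-(s ^ α))) (hlam : 0 < lam)
    (hν : 0 < ν) (hs : 0 < s) :
    ∫ x in Ioi 0, exp (-(s * x)) * (x * stableGammaMixture f α lam ν x) =
      α * s ^ (α - 1) * ν * lam ^ ν / (lam + s ^ α) ^ (ν + 1) := by
  have hrate : 0 < lam + s ^ α := by positivity
  simp only [stableGammaMixture, mul_left_comm _ (lam ^ ν / Gamma ν)]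
  rw [integral_const_mul,
    integral_exp_neg_mul_mul_integral_stable_rescaled hα hf_nonneg hlap hlam hν hs,
    integral_rpow_mul_exp_neg_mul_Ioi (by linarith) hrate, Gamma_add_one hν.ne',
    div_rpow zero_le_one hrate.le, one_rpow]
  field_simp

end Mixture

theorem limit_gamma_mixture_general (α μ lam : ℝ) (hα : 0 < α)
    (hμ : 0 < μ) (hlam : 0 < lam) (f : ℝ → ℝ)
    (hf_nonneg : ∀ x > (0 : ℝ), 0 ≤ f x)
    (hf_lt : ∀ s > (0 : ℝ),
      ∫ t in Set.Ioi (0 : ℝ), Real.exp (-(s * t)) * f t = Real.exp (-(s ^ α))) :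
    ∀ s > (0 : ℝ),
      Filter.Tendsto
        (fun n : ℕ =>
          (n / μ) *
            ∫ x in Set.Ioi (0 : ℝ),
              Real.exp (-(s * x)) *
                (x * (lam ^ (μ / n) / Real.Gamma (μ / n) *
                  ∫ t in Set.Ioi (0 : ℝ),
                    f (x * t ^ (-(1 / α))) * t ^ (-(1 / α)) * t ^ (μ / n - 1) *
                      Real.exp (-(lam * t)))))
        Filter.atTop (nhds (α * s ^ (α - 1) / (lam + s ^ α))) := by
  intro s hs
  have hcont : Continuous fun ν : ℝ => α * s ^ (α - 1) * lam ^ ν / (lam + s ^ α) ^ (ν + 1) := by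
    fun_prop (disch := intros; positivity)
  have hlim := (hcont.tendsto 0).comp (tendsto_const_div_atTop_nhds_zero_nat μ)
  simp only [comp_def, rpow_zero, zero_add, rpow_one, mul_one] at hlim
  refine hlim.congr' ?_
  filter_upwards [eventually_gt_atTop 0] with n hn
  have hν : 0 < μ / n := by positivity
  change _ = n / μ * ∫ x in Ioi 0, exp (-(s * x)) * (x * stableGammaMixture f α lam (μ / n) x)
  rw [integral_exp_neg_mul_mul_stableGammaMixture hα.ne' hf_nonneg hf_lt hlam hν hs]
  field_simp

theorem limit_gamma_mixture (α μ lam : ℝ) (hα : 0 < α) (hα1 : α < 1)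
    (hμ : 0 < μ) (hlam : 0 < lam) (f : ℝ → ℝ)
    (hf_nonneg : ∀ x > (0 : ℝ), 0 ≤ f x)
    (hf_prob : ∫ x in Set.Ioi (0 : ℝ), f x = 1)
    (hf_lt : ∀ s > (0 : ℝ),
      ∫ t in Set.Ioi (0 : ℝ), Real.exp (-(s * t)) * f t = Real.exp (-(s ^ α))) :
    ∀ s > (0 : ℝ),
      Filter.Tendsto
        (fun n : ℕ =>
          (n / μ) *
            ∫ x in Set.Ioi (0 : ℝ),
              Real.exp (-(s * x)) *
                (x * (lam ^ (μ / n) / Real.Gamma (μ / n) *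
                  ∫ t in Set.Ioi (0 : ℝ),
                    f (x * t ^ (-(1 / α))) * t ^ (-(1 / α)) * t ^ (μ / n - 1) *
                      Real.exp (-(lam * t)))))
        Filter.atTop (nhds (α * s ^ (α - 1) / (lam + s ^ α))) :=
  limit_gamma_mixture_general α μ lam hα hμ hlam f hf_nonneg hf_lt
end

section
/- For 0 < α < 1 and λ > 0, the Mittag-Leffler function admits the integral representation α E_α(-λ x^α) = x ∫₀^∞ f_α(x|t) t^{-1} e^{-λ t} dt for all x > 0, where f_α(x|t) = f_α(x t^{-1/α}) t^{-1/α} is the scaled one-sided stable density. -/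
/-!
Substituting `t = (x / u) ^ α` turns the right-hand side into
`α ∫₀^∞ f(u) exp(-λ x^α u^(-α)) du`. Expanding the exponential, this is
`α ∑ₖ (-λ x^α)^k / k! · ∫₀^∞ f(u) u^(-αk) du`, and the negative moments of the stable law are
`∫₀^∞ f(u) u^(-αk) du = k! / Γ(αk + 1)`: writing `Γ(a) u^(-a) = ∫₀^∞ s^(a-1) e^(-su) ds` and
exchanging the integrals (Tonelli, as `f ≥ 0`) gives
`Γ(αk) · ∫₀^∞ f(u) u^(-αk) du = ∫₀^∞ s^(αk-1) e^(-s^α) ds = Γ(k) / α`.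
Sum and integral may be exchanged because `∑ₖ c^k / Γ(αk + 1)` converges for every `c`,
by log-convexity of `Γ`.
-/

/-- The one-parameter Mittag-Leffler function `E_α(x) = ∑ x^k / Γ(αk+1)`. -/
noncomputable def mittagLeffler (α x : ℝ) : ℝ :=
  ∑' k : ℕ, x ^ k / Real.Gamma (α * k + 1)

open Real MeasureTheory Set Filter
open scoped Nat

lemma Real.Gamma_mul_rpow_le_Gamma_add {n : ℕ} (hn : 2 ≤ n) {x : ℝ} (hx : 0 < x) :
    Gamma n * ((n : ℝ) - 1) ^ x ≤ Gamma (n + x) := by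
  have hlog := BohrMollerup.f_add_nat_ge convexOn_log_Gamma (fun {y} hy => by
    rw [Function.comp_apply, Gamma_add_one hy.ne', log_mul hy.ne' (Gamma_pos_of_pos hy).ne',
      add_comm, Function.comp_apply]) hn hx
  have hn1 : (0 : ℝ) < n - 1 := by
    have : (2 : ℝ) ≤ n := by exact_mod_cast hn
    linarith
  have hΓ : 0 < Gamma n := Gamma_pos_of_pos (by positivity)
  rw [← exp_le_exp, exp_add, Function.comp_apply, exp_log hΓ, Function.comp_apply,
    exp_log (Gamma_pos_of_pos (by positivity)), mul_comm x, ← rpow_def_of_pos hn1] at hlog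
  exact hlog

lemma summable_pow_div_Gamma_mul_add_one {α : ℝ} (hα : 0 < α) (c : ℝ) :
    Summable fun k : ℕ => c ^ k / Gamma (α * k + 1) := by
  obtain ⟨n, hcn, hn⟩ : ∃ n : ℕ, |c| < ((n : ℝ) - 1) ^ α ∧ 2 ≤ n :=
    (((tendsto_rpow_atTop hα).comp (tendsto_atTop_add_const_right _ (-1 : ℝ)
      tendsto_natCast_atTop_atTop)).eventually_gt_atTop |c| |>.and
        (eventually_ge_atTop 2)).exists
  have hn1 : (0 : ℝ) < n - 1 := by
    have : (2 : ℝ) ≤ n := by exact_mod_cast hn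
    linarith
  set q := |c| / ((n : ℝ) - 1) ^ α
  have hq : q < 1 := (div_lt_one (by positivity)).mpr hcn
  set C := (Gamma n * ((n : ℝ) - 1) ^ (1 - (n : ℝ)))⁻¹
  refine Summable.of_norm_bounded_eventually
    ((summable_geometric_of_lt_one (by positivity) hq).mul_left C) ?_
  have hk : ∀ᶠ k : ℕ in atTop, (n : ℝ) < α * k + 1 :=
    ((tendsto_natCast_atTop_atTop.const_mul_atTop hα).atTop_add
      tendsto_const_nhds).eventually_gt_atTop _
  rw [Nat.cofinite_eq_atTop]
  filter_upwards [hk] with k hk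
  have hΓ := Gamma_mul_rpow_le_Gamma_add hn (sub_pos.mpr hk)
  rw [add_sub_cancel] at hΓ
  have hsplit : ((n : ℝ) - 1) ^ (α * k + 1 - n) =
      ((n : ℝ) - 1) ^ (1 - (n : ℝ)) * (((n : ℝ) - 1) ^ α) ^ k := by
    rw [← rpow_natCast, ← rpow_mul hn1.le, ← rpow_add hn1]
    ring_nf
  rw [norm_div, norm_pow, Real.norm_eq_abs,
    Real.norm_of_nonneg (Gamma_pos_of_pos (by positivity)).le]
  calc |c| ^ k / Gamma (α * k + 1) ≤ |c| ^ k / (Gamma n * ((n : ℝ) - 1) ^ (α * k + 1 - n)) :=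
        div_le_div_of_nonneg_left (by positivity) (by positivity) hΓ
    _ = C * q ^ k := by
        rw [hsplit, div_pow]
        simp only [C]
        field_simp

lemma setLIntegral_Ioi_ofReal_of_setIntegral_eq {g : ℝ → ℝ} {v : ℝ}
    (hg : ∀ x > 0, 0 ≤ g x) (h : ∫ x in Ioi 0, g x = v) (hv : v ≠ 0) :
    ∫⁻ x in Ioi 0, ENNReal.ofReal (g x) = ENNReal.ofReal v := by
  rw [← h, ofReal_integral_eq_lintegral_ofReal (Integrable.of_integral_ne_zero (h ▸ hv))
    ((ae_restrict_iff' measurableSet_Ioi).mpr (.of_forall hg))]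

lemma setLIntegral_Ioi_rpow_mul_exp_neg_mul {a r : ℝ} (ha : 0 < a) (hr : 0 < r) :
    ∫⁻ s in Ioi 0, ENNReal.ofReal (s ^ (a - 1) * exp (-(s * r))) =
      ENNReal.ofReal (Gamma a * r ^ (-a)) := by
  refine setLIntegral_Ioi_ofReal_of_setIntegral_eq (fun s hs => by positivity) ?_
    (by positivity)
  simp_rw [mul_comm _ r]
  rw [integral_rpow_mul_exp_neg_mul_Ioi ha hr, one_div, inv_rpow hr.le, ← rpow_neg hr.le,
    mul_comm]

section StableLaw

variable {α : ℝ} {f : ℝ → ℝ}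

lemma ofReal_Gamma_mul_setLIntegral_mul_rpow_neg (hf : AEMeasurable f (volume.restrict (Ioi 0)))
    (hf0 : ∀ u > 0, 0 ≤ f u) {a : ℝ} (ha : 0 < a) :
    ENNReal.ofReal (Gamma a) * ∫⁻ u in Ioi 0, ENNReal.ofReal (f u * u ^ (-a)) =
      ∫⁻ s in Ioi 0, ENNReal.ofReal (s ^ (a - 1)) *
        ∫⁻ u in Ioi 0, ENNReal.ofReal (exp (-(s * u)) * f u) := by
  have hmeas : AEMeasurable (Function.uncurry fun u s : ℝ =>
      ENNReal.ofReal (f u) * ENNReal.ofReal (s ^ (a - 1) * exp (-(s * u))))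
      ((volume.restrict (Ioi 0)).prod (volume.restrict (Ioi 0))) :=
    hf.ennreal_ofReal.comp_fst.mul (by fun_prop)
  calc ENNReal.ofReal (Gamma a) * ∫⁻ u in Ioi 0, ENNReal.ofReal (f u * u ^ (-a))
      = ∫⁻ u in Ioi 0, ∫⁻ s in Ioi 0,
          ENNReal.ofReal (f u) * ENNReal.ofReal (s ^ (a - 1) * exp (-(s * u))) := by
        rw [← lintegral_const_mul' _ _ ENNReal.ofReal_ne_top]
        refine setLIntegral_congr_fun measurableSet_Ioi fun u hu => ?_
        rw [lintegral_const_mul' _ _ ENNReal.ofReal_ne_top,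
          setLIntegral_Ioi_rpow_mul_exp_neg_mul ha hu, ← ENNReal.ofReal_mul (hf0 u hu),
          ← ENNReal.ofReal_mul (Gamma_pos_of_pos ha).le]
        ring_nf
    _ = ∫⁻ s in Ioi 0, ∫⁻ u in Ioi 0,
          ENNReal.ofReal (f u) * ENNReal.ofReal (s ^ (a - 1) * exp (-(s * u))) :=
        lintegral_lintegral_swap hmeas
    _ = _ := by
        refine setLIntegral_congr_fun measurableSet_Ioi fun s hs => ?_
        rw [← lintegral_const_mul' _ _ ENNReal.ofReal_ne_top]
        refine setLIntegral_congr_fun measurableSet_Ioi fun u hu => ?_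
        rw [← ENNReal.ofReal_mul (hf0 u hu), ← ENNReal.ofReal_mul (rpow_nonneg (le_of_lt hs) _)]
        ring_nf

lemma one_div_mul_Gamma_natCast_eq_Gamma_mul_factorial_div (hα : 0 < α) {k : ℕ} (hk : k ≠ 0) :
    (1 / α) * Gamma k = Gamma (α * k) * (k ! / Gamma (α * k + 1)) := by
  obtain ⟨m, rfl⟩ := Nat.exists_eq_succ_of_ne_zero hk
  have hαk : 0 < α * (m + 1 : ℕ) := by positivity
  rw [Gamma_add_one hαk.ne', Nat.cast_succ, Gamma_nat_eq_factorial, Nat.factorial_succ]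
  push_cast
  field_simp [(Gamma_pos_of_pos hαk).ne']

lemma setLIntegral_mul_rpow_neg_mul_nat (hα : 0 < α) (hf0 : ∀ u > 0, 0 ≤ f u)
    (hf_prob : ∫ u in Ioi 0, f u = 1)
    (hf_lt : ∀ s > 0, ∫ u in Ioi 0, exp (-(s * u)) * f u = exp (-(s ^ α))) (k : ℕ) :
    ∫⁻ u in Ioi 0, ENNReal.ofReal (f u * u ^ (-(α * k))) =
      ENNReal.ofReal (k ! / Gamma (α * k + 1)) := by
  rcases eq_or_ne k 0 with rfl | hk
  · simpa using setLIntegral_Ioi_ofReal_of_setIntegral_eq hf0 hf_prob one_ne_zero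
  have hf : AEMeasurable f (volume.restrict (Ioi 0)) :=
    (Integrable.of_integral_ne_zero (hf_prob ▸ one_ne_zero)).aemeasurable
  have ha : 0 < α * k := by positivity
  have hΓ : 0 < Gamma (α * k) := Gamma_pos_of_pos ha
  have hLaplace : ∫⁻ s in Ioi 0, ENNReal.ofReal (s ^ (α * k - 1)) *
      ∫⁻ u in Ioi 0, ENNReal.ofReal (exp (-(s * u)) * f u) = ENNReal.ofReal ((1 / α) * Gamma k) :=
    calc _ = ∫⁻ s in Ioi 0, ENNReal.ofReal (s ^ (α * k - 1) * exp (-s ^ α)) :=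
          setLIntegral_congr_fun measurableSet_Ioi fun s hs => by
            rw [setLIntegral_Ioi_ofReal_of_setIntegral_eq
              (fun u hu => mul_nonneg (exp_pos _).le (hf0 u hu)) (hf_lt s hs) (exp_pos _).ne',
              ← ENNReal.ofReal_mul (rpow_nonneg (le_of_lt hs) _)]
      _ = _ := setLIntegral_Ioi_ofReal_of_setIntegral_eq (fun s hs => by positivity)
          (by rw [integral_rpow_mul_exp_neg_rpow hα (by linarith), sub_add_cancel,
            mul_div_cancel_left₀ _ hα.ne']) (by positivity)
  have key := ofReal_Gamma_mul_setLIntegral_mul_rpow_neg hf hf0 ha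
  rw [hLaplace, one_div_mul_Gamma_natCast_eq_Gamma_mul_factorial_div hα hk,
    ENNReal.ofReal_mul hΓ.le] at key
  exact (ENNReal.mul_right_inj (by simpa using hΓ) ENNReal.ofReal_ne_top).mp key

lemma exp_neg_mul_rpow_neg_eq_tsum {u : ℝ} (hu : 0 ≤ u) (c : ℝ) :
    exp (-(c * u ^ (-α))) = ∑' k : ℕ, (-c) ^ k / k ! * u ^ (-(α * k)) := by
  rw [exp_eq_exp_ℝ, NormedSpace.exp_eq_tsum_div]
  refine tsum_congr fun k => ?_
  rw [neg_mul_eq_neg_mul, mul_pow, ← rpow_natCast (u ^ (-α)), ← rpow_mul hu, neg_mul]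
  ring

lemma setIntegral_mul_exp_neg_mul_rpow_neg_eq_mittagLeffler (hα : 0 < α)
    (hf : AEStronglyMeasurable f (volume.restrict (Ioi 0))) (hf0 : ∀ u > 0, 0 ≤ f u)
    (hmom : ∀ k : ℕ, ∫⁻ u in Ioi 0, ENNReal.ofReal (f u * u ^ (-(α * k))) =
      ENNReal.ofReal (k ! / Gamma (α * k + 1))) (c : ℝ) :
    ∫ u in Ioi 0, f u * exp (-(c * u ^ (-α))) = mittagLeffler α (-c) := by
  set F : ℕ → ℝ → ℝ := fun k u => (-c) ^ k / k ! * (f u * u ^ (-(α * k)))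
  have hΓ (k : ℕ) : 0 < Gamma (α * k + 1) := Gamma_pos_of_pos (by positivity)
  have hF_meas (k : ℕ) : AEStronglyMeasurable (F k) (volume.restrict (Ioi 0)) :=
    (hf.mul (by fun_prop)).const_mul _
  have hF_norm (k : ℕ) :
      ∫⁻ u in Ioi 0, ‖F k u‖ₑ = ENNReal.ofReal (|c| ^ k / Gamma (α * k + 1)) := by
    rw [setLIntegral_congr_fun measurableSet_Ioi fun u hu => by
        rw [enorm_mul,
          Real.enorm_of_nonneg (mul_nonneg (hf0 u hu) (rpow_nonneg (le_of_lt hu) _))],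
      lintegral_const_mul' _ _ enorm_ne_top, hmom, Real.enorm_eq_ofReal_abs,
      ← ENNReal.ofReal_mul (abs_nonneg _), abs_div, abs_pow, abs_neg, Nat.abs_cast]
    congr 1
    field_simp
  have hF_int (k : ℕ) : ∫ u in Ioi 0, F k u = (-c) ^ k / Gamma (α * k + 1) := by
    rw [integral_const_mul, integral_eq_lintegral_of_nonneg_ae
      ((ae_restrict_iff' measurableSet_Ioi).mpr (.of_forall fun u hu =>
        mul_nonneg (hf0 u hu) (rpow_nonneg (le_of_lt hu) _)))
      (hf.mul (by fun_prop)), hmom, ENNReal.toReal_ofReal (div_nonneg (by positivity) (hΓ k).le)]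
    field_simp
  have hF_summable : ∑' k, ∫⁻ u in Ioi 0, ‖F k u‖ₑ ≠ ⊤ := by
    simp_rw [hF_norm]
    rw [← ENNReal.ofReal_tsum_of_nonneg (fun k => div_nonneg (by positivity) (hΓ k).le)
      (summable_pow_div_Gamma_mul_add_one hα |c|)]
    exact ENNReal.ofReal_ne_top
  calc ∫ u in Ioi 0, f u * exp (-(c * u ^ (-α))) = ∫ u in Ioi 0, ∑' k, F k u :=
        setIntegral_congr_fun measurableSet_Ioi fun u hu => by
          rw [exp_neg_mul_rpow_neg_eq_tsum (le_of_lt hu), ← tsum_mul_left]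
          exact tsum_congr fun k => by ring
    _ = ∑' k, ∫ u in Ioi 0, F k u := integral_tsum hF_meas hF_summable
    _ = mittagLeffler α (-c) := tsum_congr hF_int

lemma setIntegral_comp_rpow_neg_inv_mul (hα : 0 < α) (g : ℝ → ℝ) :
    ∫ t in Ioi 0, g (t ^ (-(1 / α))) * t ^ (-(1 / α)) * t⁻¹ = α * ∫ s in Ioi 0, g s := by
  rw [← integral_comp_rpow_Ioi _ (neg_ne_zero.mpr hα.ne'), ← integral_const_mul]
  refine setIntegral_congr_fun measurableSet_Ioi fun s hs => ?_
  have hs : 0 < s := hs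
  have hpow : s ^ (-α - 1) * s * s ^ α = 1 := by
    rw [← rpow_add_one hs.ne', ← rpow_add hs]
    norm_num
  rw [smul_eq_mul, ← rpow_mul hs.le, neg_mul_neg, mul_one_div_cancel hα.ne', rpow_one, abs_neg,
    abs_of_pos hα, ← rpow_neg hs.le, neg_neg]
  linear_combination (α * g s) * hpow

lemma setIntegral_scaled_density_mul_exp (hα : 0 < α) {x : ℝ} (hx : 0 < x) (lam : ℝ) :
    x * ∫ t in Ioi 0, f (x * t ^ (-(1 / α))) * t ^ (-(1 / α)) * t⁻¹ * exp (-(lam * t)) =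
      α * ∫ u in Ioi 0, f u * exp (-(lam * x ^ α * u ^ (-α))) := by
  have hg : ∀ t ∈ Ioi (0 : ℝ),
      f (x * t ^ (-(1 / α))) * t ^ (-(1 / α)) * t⁻¹ * exp (-(lam * t)) =
      (fun s => f (x * s) * exp (-(lam * s ^ (-α)))) (t ^ (-(1 / α))) * t ^ (-(1 / α)) * t⁻¹ :=
    fun t ht => by
      beta_reduce
      rw [← rpow_mul (le_of_lt ht), neg_mul_neg, one_div_mul_cancel hα.ne', rpow_one]
      ring
  have hscale : ∀ s ∈ Ioi (0 : ℝ), f (x * s) * exp (-(lam * s ^ (-α))) =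
      (fun u => f u * exp (-(lam * x ^ α * u ^ (-α)))) (x * s) := fun s hs => by
    beta_reduce
    rw [mul_rpow hx.le (le_of_lt hs), ← mul_assoc, mul_assoc lam, ← rpow_add hx, add_neg_cancel,
      rpow_zero, mul_one]
  rw [setIntegral_congr_fun measurableSet_Ioi hg,
    setIntegral_comp_rpow_neg_inv_mul hα (fun s => f (x * s) * exp (-(lam * s ^ (-α)))),
    setIntegral_congr_fun measurableSet_Ioi hscale,
    integral_comp_mul_left_Ioi (fun u => f u * exp (-(lam * x ^ α * u ^ (-α)))) 0 hx, mul_zero,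
    smul_eq_mul]
  field_simp

end StableLaw

theorem mittagLeffler_integral_representation_general (α lam : ℝ) (hα : 0 < α) (f : ℝ → ℝ)
    (hf_nonneg : ∀ x > (0 : ℝ), 0 ≤ f x)
    (hf_prob : ∫ x in Set.Ioi (0 : ℝ), f x = 1)
    (hf_lt : ∀ s > (0 : ℝ),
      ∫ t in Set.Ioi (0 : ℝ), Real.exp (-(s * t)) * f t = Real.exp (-(s ^ α))) :
    ∀ x > (0 : ℝ),
      α * mittagLeffler α (-(lam * x ^ α)) =
        x * ∫ t in Set.Ioi (0 : ℝ),
          f (x * t ^ (-(1 / α))) * t ^ (-(1 / α)) * t⁻¹ * Real.exp (-(lam * t)) := by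
  intro x hx
  rw [setIntegral_scaled_density_mul_exp hα hx,
    setIntegral_mul_exp_neg_mul_rpow_neg_eq_mittagLeffler hα
      (Integrable.of_integral_ne_zero (hf_prob ▸ one_ne_zero)).aestronglyMeasurable hf_nonneg
      (setLIntegral_mul_rpow_neg_mul_nat hα hf_nonneg hf_prob hf_lt)]

theorem mittagLeffler_integral_representation (α lam : ℝ) (hα : 0 < α) (hα1 : α < 1)
    (hlam : 0 < lam) (f : ℝ → ℝ)
    (hf_nonneg : ∀ x > (0 : ℝ), 0 ≤ f x)
    (hf_prob : ∫ x in Set.Ioi (0 : ℝ), f x = 1)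
    (hf_lt : ∀ s > (0 : ℝ),
      ∫ t in Set.Ioi (0 : ℝ), Real.exp (-(s * t)) * f t = Real.exp (-(s ^ α))) :
    ∀ x > (0 : ℝ),
      α * mittagLeffler α (-(lam * x ^ α)) =
        x * ∫ t in Set.Ioi (0 : ℝ),
          f (x * t ^ (-(1 / α))) * t ^ (-(1 / α)) * t⁻¹ * Real.exp (-(lam * t)) :=
  mittagLeffler_integral_representation_general α lam hα f hf_nonneg hf_prob hf_lt
end
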